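/- arXiv:2009.04449 — 2 statements merged into one kernel-verified Lean document; each statement's English description precedes it below -/
import Mathlib

section
/- For f : ℝ → ℝ bounded continuous, and E_f(z) = (i/π) ∫ [1/(z − t) + t/(t² + 1)] f(t) dt on the upper half-plane, the k-th complex derivative for k ≥ 1 equals E_f⁽ᵏ⁾(z) = (−1)ᵏ (i k!/π) ∫_{-∞}^{∞} f(t)/(z − t)^{k+1} dt. -/
/-!
Differentiate under the integral sign. Since `t ↦ (z - t)⁻¹` lies in `L²(ℝ)` whenever
`Im z ≠ 0`, the kernels `f(t) / (z - t)^m` with `m ≥ 2` are integrable, and so is the Cauchy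
kernel, which splits as `(i - z) (z - t)⁻¹ (i - t)⁻¹ - i (i - t)⁻¹ (-i - t)⁻¹`. On the ball
of radius `|Im z| / 2` about `z` we have `|z - t| ≤ 2 |w - t|`, so the `w`-derivatives are
dominated by `2^m |f(t)| / |z - t|^m`. Hence `E_f' = -(i/π) ∫ f(t) / (z - t)²` and
`d/dw ∫ f(t) / (w - t)^n = -n ∫ f(t) / (w - t)^(n+1)`; iterating gives the factorial.
-/

open MeasureTheory Complex

lemma hasDerivAt_div_sub_pow {𝕜 : Type*} [NontriviallyNormedField 𝕜] (c : 𝕜) {a w : 𝕜}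
    (hw : w - a ≠ 0) (n : ℕ) :
    HasDerivAt (fun x ↦ c / (x - a) ^ n) (-n * c / (w - a) ^ (n + 1)) w := by
  cases n with
  | zero => simpa using hasDerivAt_const w c
  | succ n =>
    have h := ((((hasDerivAt_id w).sub_const a).pow (n + 1)).inv (pow_ne_zero _ hw)).const_mul c
    simp only [id, add_tsub_cancel_right, mul_one, Pi.inv_apply, Pi.pow_apply,
      ← div_eq_mul_inv] at h
    refine h.congr_deriv ?_
    field_simp
    ring

namespace Complex

variable {z w : ℂ}

lemma abs_im_le_norm_sub_ofReal (z : ℂ) (t : ℝ) : |z.im| ≤ ‖z - t‖ := by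
  simpa using abs_im_le_norm (z - t)

lemma sub_ofReal_ne_zero (hz : z.im ≠ 0) (t : ℝ) : z - t ≠ 0 :=
  norm_pos_iff.1 <| (abs_pos.2 hz).trans_le (abs_im_le_norm_sub_ofReal z t)

lemma norm_inv_sub_ofReal_le (hz : z.im ≠ 0) (t : ℝ) : ‖(z - t)⁻¹‖ ≤ |z.im|⁻¹ := by
  rw [norm_inv]
  exact inv_anti₀ (abs_pos.2 hz) (abs_im_le_norm_sub_ofReal z t)

lemma integrable_inv_norm_sub_ofReal_sq (hz : z.im ≠ 0) :
    Integrable fun t : ℝ ↦ (‖z - t‖ ^ 2)⁻¹ := by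
  refine (((integrable_inv_one_add_sq.comp_div hz).comp_sub_right z.re).const_mul
    (z.im ^ 2)⁻¹).congr (.of_forall fun t ↦ ?_)
  simp only [Complex.sq_norm, normSq_apply, sub_re, ofReal_re, sub_im, ofReal_im, sub_zero]
  field_simp
  ring

lemma memLp_two_inv_sub_ofReal (hz : z.im ≠ 0) : MemLp (fun t : ℝ ↦ (z - t)⁻¹) 2 := by
  refine (memLp_two_iff_integrable_sq_norm (by fun_prop)).2 ?_
  simpa only [norm_inv, inv_pow] using integrable_inv_norm_sub_ofReal_sq hz

lemma integrable_inv_sub_ofReal_mul_inv_sub_ofReal (hz : z.im ≠ 0) (hw : w.im ≠ 0) :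
    Integrable fun t : ℝ ↦ (z - t)⁻¹ * (w - t)⁻¹ :=
  (memLp_two_inv_sub_ofReal hz).integrable_mul (memLp_two_inv_sub_ofReal hw)

variable {g : ℝ → ℂ} {C : ℝ}

lemma integrable_div_sub_ofReal_pow (hz : z.im ≠ 0) {m : ℕ} (hm : 2 ≤ m)
    (hg : AEStronglyMeasurable g) (hgC : ∀ t, ‖g t‖ ≤ C) :
    Integrable fun t : ℝ ↦ g t / (z - t) ^ m := by
  obtain ⟨m, rfl⟩ := Nat.exists_eq_add_of_le' hm
  have hbdd : ∀ t : ℝ, ‖g t * (z - t)⁻¹ ^ m‖ ≤ C * |z.im|⁻¹ ^ m := fun t ↦ by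
    rw [norm_mul, norm_pow]
    gcongr
    exacts [(norm_nonneg _).trans (hgC 0), hgC t, norm_inv_sub_ofReal_le hz t]
  refine ((integrable_inv_sub_ofReal_mul_inv_sub_ofReal hz hz).mul_bdd
    (hg.mul (by fun_prop)) (.of_forall hbdd)).congr (.of_forall fun t ↦ ?_)
  simp only [Pi.mul_apply]
  rw [div_eq_mul_inv, ← inv_pow, pow_add]
  ring

lemma cauchyKernel_eq (hz : z.im ≠ 0) (t : ℝ) :
    1 / (z - t) + t / (t ^ 2 + 1) =
      (I - z) * ((z - t)⁻¹ * (I - t)⁻¹) - I * ((I - t)⁻¹ * (-I - t)⁻¹) := by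
  have hsq : (t : ℂ) ^ 2 + 1 = (I - t) * (-I - t) := by ring_nf; rw [I_sq]; ring
  have hz' := sub_ofReal_ne_zero hz t
  have hI := sub_ofReal_ne_zero (z := I) (by simp) t
  have hI' := sub_ofReal_ne_zero (z := -I) (by simp) t
  rw [hsq]
  field_simp
  ring

lemma integrable_cauchyKernel_mul (hz : z.im ≠ 0) (hg : AEStronglyMeasurable g)
    (hgC : ∀ t, ‖g t‖ ≤ C) :
    Integrable fun t : ℝ ↦ (1 / (z - t) + t / (t ^ 2 + 1)) * g t := by
  have hI : I.im ≠ 0 := by simp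
  have hI' : (-I).im ≠ 0 := by simp
  refine ((((integrable_inv_sub_ofReal_mul_inv_sub_ofReal hz hI).const_mul (I - z)).sub
    ((integrable_inv_sub_ofReal_mul_inv_sub_ofReal hI hI').const_mul I)).mul_bdd hg
    (.of_forall hgC)).congr (.of_forall fun t ↦ ?_)
  simp only [Pi.sub_apply, cauchyKernel_eq hz]

lemma abs_im_lt_abs_im_of_mem_ball (hw : w ∈ Metric.ball z (|z.im| / 2)) :
    |z.im| / 2 < |w.im| := by
  have h₁ := abs_sub_abs_le_abs_sub z.im w.im
  have h₂ : |z.im - w.im| ≤ ‖z - w‖ := by simpa using abs_im_le_norm (z - w)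
  rw [Metric.mem_ball, dist_comm, dist_eq_norm] at hw
  linarith

lemma norm_sub_ofReal_le_two_mul_of_mem_ball (hw : w ∈ Metric.ball z (|z.im| / 2)) (t : ℝ) :
    ‖z - t‖ ≤ 2 * ‖w - t‖ := by
  have h₁ := abs_im_lt_abs_im_of_mem_ball hw
  have h₂ := abs_im_le_norm_sub_ofReal w t
  rw [Metric.mem_ball, dist_comm, dist_eq_norm] at hw
  calc ‖z - t‖ = ‖(z - w) + (w - t)‖ := by ring_nf
    _ ≤ ‖z - w‖ + ‖w - t‖ := norm_add_le _ _
    _ ≤ 2 * ‖w - t‖ := by linarith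

theorem hasDerivAt_integral_of_hasDerivAt_div_sub_ofReal_pow {F : ℂ → ℝ → ℂ} {m : ℕ}
    (hz : z.im ≠ 0) (hm : 2 ≤ m) (hg : AEStronglyMeasurable g) (hgC : ∀ t, ‖g t‖ ≤ C)
    (hF_meas : ∀ w, AEStronglyMeasurable (F w)) (hF_int : Integrable (F z))
    (hF : ∀ w, w.im ≠ 0 → ∀ t, HasDerivAt (F · t) (g t / (w - t) ^ m) w) :
    HasDerivAt (fun w ↦ ∫ t, F w t) (∫ t, g t / (z - t) ^ m) z := by
  have hint := integrable_div_sub_ofReal_pow hz hm hg hgC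
  have him : ∀ w ∈ Metric.ball z (|z.im| / 2), w.im ≠ 0 := fun w hw ↦
    abs_pos.1 ((half_pos (abs_pos.2 hz)).trans (abs_im_lt_abs_im_of_mem_ball hw))
  have hbound : ∀ t : ℝ, ∀ w ∈ Metric.ball z (|z.im| / 2),
      ‖g t / (w - t) ^ m‖ ≤ 2 ^ m * ‖g t / (z - t) ^ m‖ := fun t w hw ↦ by
    have hzt := (abs_pos.2 hz).trans_le (abs_im_le_norm_sub_ofReal z t)
    have hwt := norm_sub_ofReal_le_two_mul_of_mem_ball hw t
    rw [norm_div, norm_div, norm_pow, norm_pow]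
    calc ‖g t‖ / ‖w - t‖ ^ m ≤ ‖g t‖ / (‖z - t‖ / 2) ^ m := by gcongr; linarith
      _ = 2 ^ m * (‖g t‖ / ‖z - t‖ ^ m) := by rw [div_pow]; field_simp
  exact (hasDerivAt_integral_of_dominated_loc_of_deriv_le
    (Metric.ball_mem_nhds z (by positivity)) (.of_forall hF_meas) hF_int hint.aestronglyMeasurable
    (.of_forall hbound) (hint.norm.const_mul _)
    (.of_forall fun t w hw ↦ hF w (him w hw) t)).2

theorem hasDerivAt_integral_div_sub_ofReal_pow (hz : z.im ≠ 0) {n : ℕ} (hn : 2 ≤ n)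
    (hg : AEStronglyMeasurable g) (hgC : ∀ t, ‖g t‖ ≤ C) :
    HasDerivAt (fun w ↦ ∫ t : ℝ, g t / (w - t) ^ n)
      (-n * ∫ t : ℝ, g t / (z - t) ^ (n + 1)) z := by
  have := hasDerivAt_integral_of_hasDerivAt_div_sub_ofReal_pow
    (F := fun w t ↦ g t / (w - t) ^ n) (g := fun t ↦ -n * g t) (C := n * C) (m := n + 1) hz
    (by omega)
    (hg.const_mul _) (fun t ↦ by simpa using mul_le_mul_of_nonneg_left (hgC t) n.cast_nonneg)
    (fun w ↦ (hg.aemeasurable.div (by fun_prop)).aestronglyMeasurable)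
    (integrable_div_sub_ofReal_pow hz hn hg hgC)
    (fun w hw t ↦ by
      simpa only [mul_div_assoc] using hasDerivAt_div_sub_pow (g t) (sub_ofReal_ne_zero hw t) n)
  simpa only [mul_div_assoc, integral_const_mul] using this

theorem hasDerivAt_integral_cauchyKernel_mul (hz : z.im ≠ 0) (hg : AEStronglyMeasurable g)
    (hgC : ∀ t, ‖g t‖ ≤ C) :
    HasDerivAt (fun w ↦ ∫ t : ℝ, (1 / (w - t) + t / (t ^ 2 + 1)) * g t)
      (-∫ t : ℝ, g t / (z - t) ^ 2) z := by
  have hderiv : ∀ w : ℂ, w.im ≠ 0 → ∀ t : ℝ, HasDerivAt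
      (fun x ↦ (1 / (x - t) + t / (t ^ 2 + 1)) * g t) (-g t / (w - t) ^ 2) w := by
    intro w hw t
    have h := ((((hasDerivAt_id w).sub_const (t : ℂ)).inv (sub_ofReal_ne_zero hw t)).add_const
      ((t : ℂ) / (t ^ 2 + 1))).mul_const (g t)
    simp only [id, Pi.inv_apply, inv_eq_one_div] at h
    exact h.congr_deriv (by ring)
  have := hasDerivAt_integral_of_hasDerivAt_div_sub_ofReal_pow
    (F := fun w t ↦ (1 / (w - t) + t / (t ^ 2 + 1)) * g t) (g := fun t ↦ -g t) (C := C) hz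
    le_rfl hg.neg (by simpa using hgC)
    (fun w ↦ (by fun_prop : Measurable _).aestronglyMeasurable.mul hg)
    (integrable_cauchyKernel_mul hz hg hgC) hderiv
  simpa only [neg_div, integral_neg] using this

end Complex

theorem iteratedDeriv_succ_eq_of_hasDerivAt_family {𝕜 : Type*} [NontriviallyNormedField 𝕜]
    {U : Set 𝕜} (hU : IsOpen U) {E : 𝕜 → 𝕜} {K : ℕ → 𝕜 → 𝕜} {c : 𝕜}
    (hE : ∀ w ∈ U, HasDerivAt E (c * K 2 w) w)
    (hK : ∀ n, 2 ≤ n → ∀ w ∈ U, HasDerivAt (K n) (-n * K (n + 1) w) w) (k : ℕ) :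
    ∀ w ∈ U, iteratedDeriv (k + 1) E w = (-1) ^ k * (k + 1).factorial * c * K (k + 2) w := by
  induction k with
  | zero =>
    intro w hw
    simp [(hE w hw).deriv]
  | succ k ih =>
    intro w hw
    have hEq : iteratedDeriv (k + 1) E =ᶠ[nhds w]
        fun x ↦ (-1) ^ k * (k + 1).factorial * c * K (k + 2) x :=
      Filter.eventually_of_mem (hU.mem_nhds hw) ih
    rw [iteratedDeriv_succ, hEq.deriv_eq,
      ((hK (k + 2) (by omega) w hw).const_mul ((-1) ^ k * (k + 1).factorial * c)).deriv,
      Nat.factorial_succ (k + 1)]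
    push_cast
    ring

/-- For `f` bounded continuous and `E_f` as above, the `k`-th derivative on the upper
half-plane equals `(−1)ᵏ (i k!/π) ∫ f(t)/(z − t)^{k+1} dt` for `k ≥ 1`. -/
theorem E_iterated_deriv (f : ℝ → ℝ)
    (hb : ∃ C : ℝ, ∀ t : ℝ, |f t| ≤ C) (hc : Continuous f)
    (E : ℂ → ℂ)
    (hE : ∀ z : ℂ, E z = (Complex.I / Real.pi) *
      ∫ t : ℝ, (1 / (z - t) + t / (t ^ 2 + 1)) * f t)
    (k : ℕ) (hk : 1 ≤ k) (z : ℂ) (hz : 0 < z.im) :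
    iteratedDeriv k E z =
      (-1 : ℂ) ^ k * (Complex.I * (k.factorial : ℂ) / Real.pi) *
        ∫ t : ℝ, (f t : ℂ) / (z - t) ^ (k + 1) := by
  obtain ⟨C, hC⟩ := hb
  have hg : AEStronglyMeasurable fun t ↦ (f t : ℂ) :=
    (continuous_ofReal.comp hc).aestronglyMeasurable
  have hgC : ∀ t, ‖(f t : ℂ)‖ ≤ C := by simpa using hC
  obtain ⟨k, rfl⟩ := Nat.exists_eq_add_of_le' hk
  rw [iteratedDeriv_succ_eq_of_hasDerivAt_family (isOpen_lt continuous_const continuous_im)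
    (K := fun n w ↦ ∫ t : ℝ, (f t : ℂ) / (w - t) ^ n) (c := -(I / Real.pi)) ?_
    (fun n hn w hw ↦ hasDerivAt_integral_div_sub_ofReal_pow hw.ne' hn hg hgC) k z hz]
  · ring
  · intro w hw
    rw [show E = _ from funext hE]
    simpa using (hasDerivAt_integral_cauchyKernel_mul hw.ne' hg hgC).const_mul (I / Real.pi)
end

section
/- If f : ℝ → ℝ is bounded continuous with f(0) = 1, then the Poisson extension satisfies lim_{y → 0⁺} (1/π) ∫_{-∞}^{∞} [y/(t² + y²)] f(t) dt = 1. -/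
open MeasureTheory Filter

/-- Boundary value of the Poisson integral at `x = 0`: if `f` is bounded continuous with
`f 0 = 1`, then `(1/π) ∫ y/(t² + y²) f(t) dt → 1` as `y → 0⁺`. -/
theorem poisson_boundary_value (f : ℝ → ℝ)
    (hb : ∃ C : ℝ, ∀ t : ℝ, |f t| ≤ C) (hc : Continuous f) (h0 : f 0 = 1) :
    Tendsto (fun y : ℝ => (1 / Real.pi) * ∫ t : ℝ, y / (t ^ 2 + y ^ 2) * f t)
      (nhdsWithin 0 (Set.Ioi 0)) (nhds 1) := by
  obtain ⟨C, hC⟩ := hb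
  have hC0 : 0 ≤ C := le_trans (abs_nonneg _) (hC 0)
  -- Substitution t = y * s
  have key : ∀ y : ℝ, 0 < y →
      (∫ t : ℝ, y / (t ^ 2 + y ^ 2) * f t) = ∫ s : ℝ, (1 + s ^ 2)⁻¹ * f (y * s) := by
    intro y hy
    have hy' : y ≠ 0 := hy.ne'
    have hg : ∀ s : ℝ,
        (fun t : ℝ => y * (y / (t ^ 2 + y ^ 2) * f t)) (y * s)
          = (1 + s ^ 2)⁻¹ * f (y * s) := by
      intro s
      have h2 : (y * s) ^ 2 + y ^ 2 = y ^ 2 * (1 + s ^ 2) := by ring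
      have hpos : (0:ℝ) < 1 + s ^ 2 := by positivity
      simp only
      rw [h2]
      field_simp
    have := MeasureTheory.Measure.integral_comp_mul_left
      (fun t : ℝ => y * (y / (t ^ 2 + y ^ 2) * f t)) y
    simp only [hg] at this
    rw [this, integral_const_mul, abs_of_pos (inv_pos.mpr hy), smul_eq_mul]
    rw [← mul_assoc, inv_mul_cancel₀ hy', one_mul]
  -- Dominated convergence
  have hlim : Tendsto (fun y : ℝ => ∫ s : ℝ, (1 + s ^ 2)⁻¹ * f (y * s))
      (nhdsWithin 0 (Set.Ioi 0)) (nhds (∫ s : ℝ, (1 + s ^ 2)⁻¹)) := by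
    have h := tendsto_integral_filter_of_dominated_convergence
      (μ := (volume : Measure ℝ)) (l := nhdsWithin (0:ℝ) (Set.Ioi 0))
      (F := fun y : ℝ => fun s : ℝ => (1 + s ^ 2)⁻¹ * f (y * s))
      (f := fun s : ℝ => (1 + s ^ 2)⁻¹)
      (bound := fun s : ℝ => C * (1 + s ^ 2)⁻¹)
      ?_ ?_ ?_ ?_
    · exact h
    · filter_upwards with y
      exact (((continuous_const.add (continuous_pow 2)).inv₀ (fun s => by show (1:ℝ) + s ^ 2 ≠ 0; positivity)).mul
        (hc.comp (continuous_const.mul continuous_id))).aestronglyMeasurable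
    · filter_upwards with y
      filter_upwards with s
      have hpos : (0:ℝ) < 1 + s ^ 2 := by positivity
      rw [norm_mul, Real.norm_eq_abs, Real.norm_eq_abs, abs_of_pos (inv_pos.mpr hpos),
        mul_comm C]
      exact mul_le_mul_of_nonneg_left (hC _) (le_of_lt (inv_pos.mpr hpos))
    · exact integrable_inv_one_add_sq.const_mul C
    · filter_upwards with s
      have hcont : Continuous fun y : ℝ => (1 + s ^ 2)⁻¹ * f (y * s) :=
        continuous_const.mul (hc.comp (continuous_id.mul continuous_const))
      have := (hcont.tendsto 0).mono_left (nhdsWithin_le_nhds (s := Set.Ioi (0:ℝ)))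
      simpa [h0] using this
  have hπ : Real.pi ≠ 0 := Real.pi_ne_zero
  have hfinal : Tendsto (fun y : ℝ => (1 / Real.pi) * ∫ s : ℝ, (1 + s ^ 2)⁻¹ * f (y * s))
      (nhdsWithin 0 (Set.Ioi 0)) (nhds 1) := by
    have := hlim.const_mul (1 / Real.pi)
    rw [integral_univ_inv_one_add_sq, one_div_mul_cancel hπ] at this
    exact this
  refine hfinal.congr' ?_
  filter_upwards [self_mem_nhdsWithin] with y hy
  rw [key y hy]
end
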